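/- arXiv:1904.07230 — 4 statements merged into one kernel-verified Lean document; each statement's English description precedes it below -/
import Mathlib

section
/- The minimal norm of a nonzero vector in the face-centered cubic lattice L_D is √2, and the set of vectors of minimal norm in L_D consists of exactly the 12 vectors obtained by placing ±1 in two coordinates and 0 in the remaining one. -/
/-!
For an integer vector `m`, `m i ^ 2 ≡ m i (mod 2)`, so `‖m‖² = ∑ m i ^ 2` has the parity of
`∑ m i`. On `L_D` the squared norm of a nonzero vector is therefore even and positive, hence
at least `2`, attained by `(1, 1, 0)`. Three integer squares summing to `2` must be `0, 1, 1`,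
which gives the twelve vectors; conversely these have squared norm `2`, which is even, so they
lie in `L_D`.
-/

open Finset

theorem EuclideanSpace.norm_eq_sqrt_intCast_sum_sq {ι : Type*} [Fintype ι]
    (x : EuclideanSpace ℝ ι) (m : ι → ℤ) (hm : ∀ i, x i = m i) :
    ‖x‖ = √((∑ i, m i ^ 2 : ℤ) : ℝ) := by
  simp [EuclideanSpace.norm_eq, hm]

theorem Int.even_sum_sq_iff {ι : Type*} (s : Finset ι) (m : ι → ℤ) :
    Even (∑ i ∈ s, m i ^ 2) ↔ Even (∑ i ∈ s, m i) := by
  rw [← Int.even_sub, ← sum_sub_distrib]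
  refine even_sum _ fun i _ => ?_
  simpa [sq, mul_sub] using Int.even_mul_pred_self (m i)

theorem Int.two_le_sum_sq_of_even {ι : Type*} [Fintype ι] {m : ι → ℤ} (hm : m ≠ 0)
    (heven : Even (∑ i, m i ^ 2)) : 2 ≤ ∑ i, m i ^ 2 := by
  obtain ⟨i, hi⟩ := Function.ne_iff.mp hm
  have hpos : 0 < ∑ i, m i ^ 2 :=
    sum_pos' (fun j _ => sq_nonneg (m j)) ⟨i, mem_univ i, sq_pos_of_ne_zero hi⟩
  obtain ⟨k, hk⟩ := heven
  omega

def IsD3Root {R : Type*} [Zero R] [One R] [Neg R] (v : Fin 3 → R) : Prop :=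
  ∃ i, v i = 0 ∧ ∀ j, j ≠ i → (v j = 1 ∨ v j = -1)

theorem isD3Root_intCast_iff {R : Type*} [AddGroupWithOne R] [CharZero R] (m : Fin 3 → ℤ) :
    IsD3Root (fun i => (m i : R)) ↔ IsD3Root m := by
  simp only [IsD3Root, ← Int.cast_one (R := R), ← Int.cast_neg, Int.cast_inj, Int.cast_eq_zero]

theorem IsD3Root.exists_intCast {R : Type*} [AddGroupWithOne R] {v : Fin 3 → R}
    (hv : IsD3Root v) : ∃ m : Fin 3 → ℤ, ∀ i, v i = m i := by
  obtain ⟨i, hi, hj⟩ := hv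
  have hint : ∀ j, ∃ n : ℤ, v j = n := fun j => by
    by_cases hji : j = i
    · exact ⟨0, by simp [hji, hi]⟩
    · rcases hj j hji with h | h
      · exact ⟨1, by simp [h]⟩
      · exact ⟨-1, by simp [h]⟩
  exact ⟨fun j => (hint j).choose, fun j => (hint j).choose_spec⟩

theorem Int.sum_sq_eq_two_iff_isD3Root (m : Fin 3 → ℤ) : ∑ i, m i ^ 2 = 2 ↔ IsD3Root m := by
  unfold IsD3Root
  rw [Fin.sum_univ_three]
  constructor
  · intro h
    have hb : ∀ i, -1 ≤ m i ∧ m i ≤ 1 := fun i => by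
      have : m i ^ 2 ≤ 2 := by
        fin_cases i <;> simp <;> nlinarith [sq_nonneg (m 0), sq_nonneg (m 1), sq_nonneg (m 2)]
      constructor <;> nlinarith
    obtain ⟨h0l, h0u⟩ := hb 0
    obtain ⟨h1l, h1u⟩ := hb 1
    obtain ⟨h2l, h2u⟩ := hb 2
    interval_cases h0 : m 0 <;> interval_cases h1 : m 1 <;> interval_cases h2 : m 2 <;>
      simp_all [Fin.forall_fin_succ]
  · rintro ⟨i, hi, hj⟩
    simp only [← sq_eq_one_iff] at hj
    fin_cases i <;> simp_all [Fin.forall_fin_succ, -sq_eq_one_iff]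

theorem EuclideanSpace.norm_eq_sqrt_two_iff {ι : Type*} [Fintype ι]
    (x : EuclideanSpace ℝ ι) (m : ι → ℤ) (hm : ∀ i, x i = m i) :
    ‖x‖ = √2 ↔ ∑ i, m i ^ 2 = 2 := by
  rw [norm_eq_sqrt_intCast_sum_sq x m hm, Real.sqrt_inj (by positivity) zero_le_two]
  exact_mod_cast Iff.rfl

theorem EuclideanSpace.norm_eq_sqrt_two_iff_isD3Root (x : EuclideanSpace ℝ (Fin 3))
    (m : Fin 3 → ℤ) (hm : ∀ i, x i = m i) : ‖x‖ = √2 ↔ IsD3Root x.ofLp := by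
  rw [norm_eq_sqrt_two_iff x m hm, Int.sum_sq_eq_two_iff_isD3Root, funext hm,
    isD3Root_intCast_iff]

open EuclideanSpace in
/-- The minimal norm of a nonzero vector in the face-centered cubic lattice
`L_D` is `√2`, and the minimal vectors are exactly the 12 vectors with one
coordinate `0` and the other two coordinates `±1`. -/
theorem stmt_5
    (L_D : Set (EuclideanSpace ℝ (Fin 3)))
    (hD : L_D = {x | ∃ m : Fin 3 → ℤ, (∀ i, x i = (m i : ℝ)) ∧
      Even (m 0 + m 1 + m 2)}) :
    IsLeast {r : ℝ | ∃ x ∈ L_D, x ≠ 0 ∧ ‖x‖ = r} (Real.sqrt 2) ∧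
      {x ∈ L_D | ‖x‖ = Real.sqrt 2} =
        {x : EuclideanSpace ℝ (Fin 3) |
          ∃ i, x i = 0 ∧ ∀ j, j ≠ i → (x j = 1 ∨ x j = -1)} := by
  have parity (m : Fin 3 → ℤ) : Even (m 0 + m 1 + m 2) ↔ Even (∑ i, m i ^ 2) := by
    rw [Int.even_sum_sq_iff, Fin.sum_univ_three]
  subst hD
  have hv (i : Fin 3) : !₂[(1 : ℝ), 1, 0] i = ((![1, 1, 0] : Fin 3 → ℤ) i : ℝ) := by
    fin_cases i <;> simp
  refine ⟨⟨⟨!₂[1, 1, 0], ⟨_, hv, by decide⟩, ?_, (norm_eq_sqrt_two_iff _ _ hv).mpr (by decide)⟩,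
    ?_⟩, ?_⟩
  · exact fun h => by simpa using congrArg (· 0) h
  · rintro r ⟨x, ⟨m, hm, heven⟩, hx0, rfl⟩
    have hm0 : m ≠ 0 := by
      rintro rfl
      exact hx0 (by ext i; simp [hm])
    rw [norm_eq_sqrt_intCast_sum_sq x m hm]
    exact Real.sqrt_le_sqrt (mod_cast Int.two_le_sum_sq_of_even hm0 ((parity m).mp heven))
  · ext x
    change _ ↔ IsD3Root x.ofLp
    constructor
    · rintro ⟨⟨m, hm, -⟩, hx⟩
      exact (norm_eq_sqrt_two_iff_isD3Root x m hm).mp hx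
    · intro hx
      obtain ⟨m, hm⟩ := hx.exists_intCast
      have hnorm := (norm_eq_sqrt_two_iff_isD3Root x m hm).mpr hx
      have hsq := (norm_eq_sqrt_two_iff x m hm).mp hnorm
      exact ⟨⟨m, hm, (parity m).mpr (hsq ▸ even_two)⟩, hnorm⟩
end

section
/- Every orthogonal transformation g of ℝ³ preserving the body-centered cubic lattice L_DT also preserves ℤ³, and conversely every orthogonal transformation preserving ℤ³ preserves L_DT; i.e., G(L_DT) = G(ℤ³), where G(L) = {g ∈ O(3) : g(L) = L}. -/
/-! For an integer vector `m`, `∑ mᵢ² mod 4` is the number of odd coordinates. Hence a point of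
`ℤ³` lies in `L_DT` iff its squared norm is `0` or `3 mod 4`, a condition preserved by every
isometry that preserves `ℤ³`. Conversely, if `g` preserves `L_DT` and `x ∈ ℤ³`, the points
`1 = (1, 1, 1)` and `2x + 1` of `L_DT` have squared norm `3 mod 4`, so their images have odd
coordinates and `g x = (g (2x + 1) - g 1) / 2` is integral. -/

open Set

local notation "ℝ³" => EuclideanSpace ℝ (Fin 3)

theorem LinearIsometryEquiv.image_eq_self_iff_mapsTo {R E : Type*} [Semiring R]
    [SeminormedAddCommGroup E] [Module R E] (e : E ≃ₗᵢ[R] E) (s : Set E) :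
    e '' s = s ↔ MapsTo e s s ∧ MapsTo e.symm s s := by
  rw [subset_antisymm_iff, ← mapsTo_iff_image_subset, e.image_eq_preimage_symm]
  rfl

theorem Int.sq_emod_four_eq_emod_two (a : ℤ) : a ^ 2 % 4 = a % 2 := by
  obtain ⟨b, rfl⟩ | ⟨b, rfl⟩ := a.even_or_odd <;> ring_nf <;> omega

section SumOfSquares

variable {ι : Type*} [Fintype ι]

theorem EuclideanSpace.norm_sq_eq_sum_sq_of_coords {x : EuclideanSpace ℝ ι} {m : ι → ℤ}
    (hm : ∀ i, x i = m i) : ‖x‖ ^ 2 = ((∑ i, m i ^ 2 : ℤ) : ℝ) := by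
  simp [EuclideanSpace.norm_sq_eq, hm]

theorem LinearIsometry.sum_sq_coords_eq (g : EuclideanSpace ℝ ι →ₗᵢ[ℝ] EuclideanSpace ℝ ι)
    {x : EuclideanSpace ℝ ι} {m p : ι → ℤ} (hm : ∀ i, x i = m i) (hp : ∀ i, g x i = p i) :
    ∑ i, p i ^ 2 = ∑ i, m i ^ 2 := by
  have h := g.norm_map x
  rw [← sq_eq_sq₀ (norm_nonneg _) (norm_nonneg _),
    EuclideanSpace.norm_sq_eq_sum_sq_of_coords hp,
    EuclideanSpace.norm_sq_eq_sum_sq_of_coords hm] at h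
  exact_mod_cast h

end SumOfSquares

def IsBCC (m : Fin 3 → ℤ) : Prop :=
  Even (m 0 + m 1) ∧ Even (m 1 + m 2) ∧ Even (m 2 + m 0)

theorem sum_sq_emod_four_eq_three_iff (m : Fin 3 → ℤ) :
    (∑ i, m i ^ 2) % 4 = 3 ↔ ∀ i, Odd (m i) := by
  have := Int.sq_emod_four_eq_emod_two (m 0)
  have := Int.sq_emod_four_eq_emod_two (m 1)
  have := Int.sq_emod_four_eq_emod_two (m 2)
  simp only [Fin.sum_univ_three, Fin.forall_fin_succ, IsEmpty.forall_iff, Fin.succ_zero_eq_one,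
    Fin.succ_one_eq_two, and_true, Int.odd_iff]
  omega

theorem isBCC_iff_sum_sq_emod_four (m : Fin 3 → ℤ) :
    IsBCC m ↔ (∑ i, m i ^ 2) % 4 = 0 ∨ (∑ i, m i ^ 2) % 4 = 3 := by
  have := Int.sq_emod_four_eq_emod_two (m 0)
  have := Int.sq_emod_four_eq_emod_two (m 1)
  have := Int.sq_emod_four_eq_emod_two (m 2)
  simp only [IsBCC, Fin.sum_univ_three, Int.even_iff]
  omega

def intLattice : Set ℝ³ := {x | ∀ i, ∃ n : ℤ, x i = n}

def bccLattice : Set ℝ³ := {x | ∃ m : Fin 3 → ℤ, (∀ i, x i = m i) ∧ IsBCC m}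

section

variable (g : ℝ³ →ₗᵢ[ℝ] ℝ³)

theorem exists_odd_coords_apply_of_mapsTo_bccLattice (hg : MapsTo g bccLattice bccLattice)
    {x : ℝ³} {m : Fin 3 → ℤ} (hm : ∀ i, x i = m i) (hodd : ∀ i, Odd (m i)) :
    ∃ p : Fin 3 → ℤ, (∀ i, g x i = p i) ∧ ∀ i, Odd (p i) := by
  obtain ⟨p, hp, -⟩ := hg ⟨m, hm, (hodd 0).add_odd (hodd 1), (hodd 1).add_odd (hodd 2),
    (hodd 2).add_odd (hodd 0)⟩
  refine ⟨p, hp, ?_⟩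
  rw [← sum_sq_emod_four_eq_three_iff, g.sum_sq_coords_eq hm hp, sum_sq_emod_four_eq_three_iff]
  exact hodd

theorem mapsTo_intLattice_of_mapsTo_bccLattice (hg : MapsTo g bccLattice bccLattice) :
    MapsTo g intLattice intLattice := by
  intro x hx
  choose n hn using hx
  let one : ℝ³ := WithLp.toLp 2 fun _ => 1
  obtain ⟨q, hq, hq_odd⟩ := exists_odd_coords_apply_of_mapsTo_bccLattice g hg
    (x := one) (m := fun _ => 1) (fun _ => by simp [one]) (fun _ => odd_one)
  obtain ⟨p, hp, hp_odd⟩ := exists_odd_coords_apply_of_mapsTo_bccLattice g hg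
    (x := (2 : ℝ) • x + one) (m := fun i => 2 * n i + 1) (fun i => by simp [one, hn i])
    (fun i => odd_two_mul_add_one (n i))
  intro i
  obtain ⟨k, hk⟩ := (hp_odd i).sub_odd (hq_odd i)
  refine ⟨k, ?_⟩
  have hgi : g ((2 : ℝ) • x + one) i = 2 * g x i + g one i := by simp
  have hk' : (p i : ℝ) - q i = k + k := by exact_mod_cast hk
  rw [hp, hq] at hgi
  linarith

theorem mapsTo_bccLattice_of_mapsTo_intLattice (hg : MapsTo g intLattice intLattice) :
    MapsTo g bccLattice bccLattice := by
  rintro x ⟨m, hm, hbcc⟩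
  choose p hp using hg fun i => ⟨m i, hm i⟩
  refine ⟨p, hp, ?_⟩
  rw [isBCC_iff_sum_sq_emod_four, g.sum_sq_coords_eq hm hp, ← isBCC_iff_sum_sq_emod_four]
  exact hbcc

end

/-- An orthogonal transformation of `ℝ³` preserves the body-centered cubic
lattice `L_DT` if and only if it preserves `ℤ³`; i.e. `G(L_DT) = G(ℤ³)`. -/
theorem stmt_12
    (L_DT : Set (EuclideanSpace ℝ (Fin 3)))
    (hDT : L_DT = {x | ∃ m : Fin 3 → ℤ, (∀ i, x i = (m i : ℝ)) ∧
      Even (m 0 + m 1) ∧ Even (m 1 + m 2) ∧ Even (m 2 + m 0)})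
    (Z3 : Set (EuclideanSpace ℝ (Fin 3)))
    (hZ : Z3 = {x | ∀ i, ∃ n : ℤ, x i = (n : ℝ)})
    (g : EuclideanSpace ℝ (Fin 3) ≃ₗᵢ[ℝ] EuclideanSpace ℝ (Fin 3)) :
    g '' L_DT = L_DT ↔ g '' Z3 = Z3 := by
  change L_DT = bccLattice at hDT
  change Z3 = intLattice at hZ
  subst hDT hZ
  rw [g.image_eq_self_iff_mapsTo, g.image_eq_self_iff_mapsTo]
  exact ⟨fun ⟨h, h'⟩ => ⟨mapsTo_intLattice_of_mapsTo_bccLattice g.toLinearIsometry h,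
      mapsTo_intLattice_of_mapsTo_bccLattice g.symm.toLinearIsometry h'⟩,
    fun ⟨h, h'⟩ => ⟨mapsTo_bccLattice_of_mapsTo_intLattice g.toLinearIsometry h,
      mapsTo_bccLattice_of_mapsTo_intLattice g.symm.toLinearIsometry h'⟩⟩
end

section
/- If g ∈ O(3) preserves a lattice L in ℝ³ (i.e., g(L) = L) and g has finite order n, then n ∈ {1, 2, 3, 4, 6} (the crystallographic restriction in dimension 3). -/
/-!
In a basis of the lattice, `g` has a rational matrix `M`, and `M ^ k = 1` exactly when
`minpoly ℚ M ∣ X ^ k - 1 = ∏_{d ∣ k} Φ_d`. If `p ^ k` is a prime power dividing the order `n`,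
then `M ^ (n / p ^ k)` has order `p ^ k`, which forces `Φ_{p ^ k}` into its minimal polynomial, so
`φ (p ^ k) ≤ 3` and `p ^ k ∈ {2, 3, 4}`; hence `n ∣ 12`. Order `12` is excluded because
`M ^ 6 ≠ 1` and `M ^ 4 ≠ 1` put both `Φ_4` and one of `Φ_3, Φ_6` (all coprime, `Φ_12` having
degree `4`) into `minpoly ℚ M`, of degree at most `3`.
-/

open Polynomial

theorem minpoly_dvd_X_pow_sub_one_iff {K R : Type*} [Field K] [Ring R] [Algebra K R] {a : R}
    {k : ℕ} : minpoly K a ∣ X ^ k - 1 ↔ a ^ k = 1 := by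
  simp [minpoly.dvd_iff, sub_eq_zero]

section Cyclotomic

variable {R : Type*} [Ring R] [Algebra ℚ R]

/-- `X ^ N - 1 = (∏ Φ_d) * (X ^ m - 1)` over the `d` in the gap; were `minpoly ℚ a` divisible by
none of these irreducible `Φ_d`, it would be coprime to their product and divide `X ^ m - 1`. -/
theorem exists_cyclotomic_dvd_minpoly_of_pow_ne_one {a : R} {N m : ℕ} (hN : N ≠ 0) (hm : m ∣ N)
    (hN1 : a ^ N = 1) (hm1 : a ^ m ≠ 1) :
    ∃ d ∈ N.divisors \ m.divisors, cyclotomic d ℚ ∣ minpoly ℚ a := by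
  have hm0 : m ≠ 0 := by rintro rfl; exact hm1 (pow_zero a)
  have hfactor : (∏ d ∈ N.divisors \ m.divisors, cyclotomic d ℚ) * (X ^ m - 1) = X ^ N - 1 := by
    rw [← prod_cyclotomic_eq_X_pow_sub_one (Nat.pos_of_ne_zero hm0),
      ← prod_cyclotomic_eq_X_pow_sub_one (Nat.pos_of_ne_zero hN),
      Finset.prod_sdiff (Nat.divisors_subset_of_dvd hN hm)]
  by_contra! hnone
  have hcop : IsCoprime (minpoly ℚ a) (∏ d ∈ N.divisors \ m.divisors, cyclotomic d ℚ) :=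
    IsCoprime.prod_right fun d hd => ((cyclotomic.irreducible_rat (Nat.pos_of_mem_divisors
      (Finset.mem_sdiff.mp hd).1)).coprime_iff_not_dvd.mpr (hnone d hd)).symm
  refine hm1 (minpoly_dvd_X_pow_sub_one_iff.mp (hcop.dvd_of_dvd_mul_left ?_))
  rw [hfactor]
  exact minpoly_dvd_X_pow_sub_one_iff.mpr hN1

theorem cyclotomic_dvd_minpoly_of_orderOf_eq_prime_pow {a : R} {p k : ℕ} (hp : p.Prime)
    (ha : orderOf a = p ^ (k + 1)) : cyclotomic (p ^ (k + 1)) ℚ ∣ minpoly ℚ a := by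
  have hlt : p ^ k < orderOf a := ha ▸ Nat.pow_lt_pow_succ hp.one_lt
  obtain ⟨d, hd, hdvd⟩ := exists_cyclotomic_dvd_minpoly_of_pow_ne_one (pow_pos hp.pos _).ne'
    (pow_dvd_pow p k.le_succ) (ha ▸ pow_orderOf_eq_one a)
    (pow_ne_one_of_lt_orderOf (pow_pos hp.pos _).ne' hlt)
  obtain ⟨hdN, hdm⟩ := Finset.mem_sdiff.mp hd
  obtain ⟨j, hj, rfl⟩ := (Nat.mem_divisors_prime_pow hp _).mp hdN
  obtain rfl : j = k + 1 := by
    by_contra hjk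
    exact hdm ((Nat.mem_divisors_prime_pow hp _).mpr ⟨j, by omega, rfl⟩)
  exact hdvd

end Cyclotomic

namespace Matrix

variable {ι : Type*} [Fintype ι] [DecidableEq ι]

theorem sum_totient_le_card_of_cyclotomic_dvd_minpoly (M : Matrix ι ι ℚ) {S : Finset ℕ}
    (hS : ∀ d ∈ S, cyclotomic d ℚ ∣ minpoly ℚ M) : ∑ d ∈ S, d.totient ≤ Fintype.card ι := by
  have hprod : ∏ d ∈ S, cyclotomic d ℚ ∣ M.charpoly :=
    (Finset.prod_dvd_of_coprime (fun _ _ _ _ hde => cyclotomic.isCoprime_rat hde) hS).trans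
      M.minpoly_dvd_charpoly
  calc ∑ d ∈ S, d.totient = (∏ d ∈ S, cyclotomic d ℚ).natDegree := by
        rw [natDegree_prod _ _ fun d _ => cyclotomic_ne_zero d ℚ]
        simp only [natDegree_cyclotomic]
    _ ≤ M.charpoly.natDegree := natDegree_le_of_dvd hprod M.charpoly_monic.ne_zero
    _ = Fintype.card ι := M.charpoly_natDegree_eq_dim

theorem totient_le_card_of_prime_pow_dvd_orderOf (M : Matrix ι ι ℚ) (hM : orderOf M ≠ 0)
    {p k : ℕ} (hp : p.Prime) (hpk : p ^ (k + 1) ∣ orderOf M) :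
    (p ^ (k + 1)).totient ≤ Fintype.card ι := by
  have hdvd := cyclotomic_dvd_minpoly_of_orderOf_eq_prime_pow hp (orderOf_pow_orderOf_div hM hpk)
  simpa using sum_totient_le_card_of_cyclotomic_dvd_minpoly (M ^ (orderOf M / p ^ (k + 1)))
    (S := {p ^ (k + 1)}) (by simpa using hdvd)

end Matrix

theorem Nat.prime_pow_dvd_twelve_of_totient_le_three {p k : ℕ} (hp : p.Prime)
    (h : (p ^ k).totient ≤ 3) : p ^ k ∣ 12 := by
  have hpos : 0 < p ^ k := pow_pos hp.pos k
  have hle : p ^ k ≤ 2 * (p ^ k).totient := by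
    cases k with
    | zero => simp
    | succ k =>
      have hp2 : p ≤ 2 * (p - 1) := by have := hp.two_le; omega
      calc p ^ (k + 1) = p ^ k * p := pow_succ p k
        _ ≤ p ^ k * (2 * (p - 1)) := Nat.mul_le_mul_left _ hp2
        _ = 2 * (p ^ (k + 1)).totient := by rw [Nat.totient_prime_pow_succ hp]; ring
  generalize p ^ k = q at *
  have hq : q ≤ 6 := by omega
  interval_cases q <;> simp_all [Nat.totient_prime Nat.prime_five]

namespace Matrix

variable {ι : Type*} [Fintype ι] [DecidableEq ι]

theorem orderOf_dvd_twelve (M : Matrix ι ι ℚ) (hι : Fintype.card ι ≤ 3) (hM : orderOf M ≠ 0) :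
    orderOf M ∣ 12 := by
  refine (Nat.dvd_iff_prime_pow_dvd_dvd 12 _).mpr fun p k hp hpk => ?_
  refine Nat.prime_pow_dvd_twelve_of_totient_le_three hp ?_
  cases k with
  | zero => simp
  | succ k => exact (M.totient_le_card_of_prime_pow_dvd_orderOf hM hp hpk).trans hι

theorem orderOf_ne_twelve (M : Matrix ι ι ℚ) (hι : Fintype.card ι ≤ 3) : orderOf M ≠ 12 := by
  intro h12
  have h1 : M ^ 12 = 1 := h12 ▸ pow_orderOf_eq_one M
  have hne {k : ℕ} (hk0 : k ≠ 0) (hk : k < 12) : M ^ k ≠ 1 :=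
    pow_ne_one_of_lt_orderOf hk0 (h12 ▸ hk)
  obtain ⟨d, hd, hdM⟩ := exists_cyclotomic_dvd_minpoly_of_pow_ne_one (by norm_num)
    (by norm_num : 6 ∣ 12) h1 (hne (by norm_num) (by norm_num))
  obtain ⟨e, he, heM⟩ := exists_cyclotomic_dvd_minpoly_of_pow_ne_one (by norm_num)
    (by norm_num : 4 ∣ 12) h1 (hne (by norm_num) (by norm_num))
  have hsum : ∑ x ∈ {d, e}, x.totient ≤ 3 :=
    (M.sum_totient_le_card_of_cyclotomic_dvd_minpoly (by simp [hdM, heM])).trans hι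
  rw [show (12 : ℕ).divisors \ (6 : ℕ).divisors = {4, 12} by decide] at hd
  rw [show (12 : ℕ).divisors \ (4 : ℕ).divisors = {3, 6, 12} by decide] at he
  simp only [Finset.mem_insert, Finset.mem_singleton] at hd he
  rcases hd with rfl | rfl <;> rcases he with rfl | rfl | rfl <;> revert hsum <;> decide

theorem orderOf_eq_one_or_two_or_three_or_four_or_six (M : Matrix ι ι ℚ)
    (hι : Fintype.card ι ≤ 3) (hM : orderOf M ≠ 0) :
    orderOf M = 1 ∨ orderOf M = 2 ∨ orderOf M = 3 ∨ orderOf M = 4 ∨ orderOf M = 6 := by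
  have h12 := M.orderOf_ne_twelve hι
  have hdvd := M.orderOf_dvd_twelve hι hM
  generalize orderOf M = n at *
  have hn : n ≤ 12 := Nat.le_of_dvd (by norm_num) hdvd
  interval_cases n <;> omega

end Matrix

def LinearIsometryEquiv.toLinearMapMonoidHom {R E : Type*} [Semiring R] [SeminormedAddCommGroup E]
    [Module R E] : (E ≃ₗᵢ[R] E) →* Module.End R E where
  toFun e := e.toLinearEquiv.toLinearMap
  map_one' := rfl
  map_mul' _ _ := rfl

theorem LinearIsometryEquiv.orderOf_toLinearMap {R E : Type*} [Semiring R]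
    [SeminormedAddCommGroup E] [Module R E] (e : E ≃ₗᵢ[R] E) :
    orderOf e.toLinearEquiv.toLinearMap = orderOf e :=
  orderOf_injective toLinearMapMonoidHom (fun _ _ h => ext (LinearMap.congr_fun h)) e

theorem Module.End.exists_matrix_orderOf_eq_of_repr_mem_range {K L ι V : Type*} [Field K]
    [Field L] [Algebra K L] [Fintype ι] [DecidableEq ι] [AddCommGroup V] [Module L V]
    (B : Module.Basis ι L V) (f : Module.End L V)
    (hf : ∀ i j, B.repr (f (B j)) i ∈ Set.range (algebraMap K L)) :
    ∃ M : Matrix ι ι K, orderOf M = orderOf f := by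
  choose M hM using hf
  let φ : Matrix ι ι K →+* Matrix ι ι L := (algebraMap K L).mapMatrix
  refine ⟨Matrix.of M, ?_⟩
  calc orderOf (Matrix.of M)
      = orderOf (φ (Matrix.of M)) :=
        (orderOf_injective φ.toMonoidHom (Matrix.map_injective (algebraMap K L).injective) _).symm
    _ = orderOf (LinearMap.toMatrixAlgEquiv B f) := by
        congr 1
        ext i j
        simp [φ, LinearMap.toMatrixAlgEquiv_apply, hM]
    _ = orderOf f := MulEquiv.orderOf_eq (LinearMap.toMatrixAlgEquiv B).toMulEquiv f

/-- Crystallographic restriction in dimension 3: a finite-order orthogonal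
transformation of `ℝ³` preserving a (full-rank) lattice has order
`1`, `2`, `3`, `4` or `6`. -/
theorem stmt_17 (L : AddSubgroup (EuclideanSpace ℝ (Fin 3)))
    (B : Module.Basis (Fin 3) ℝ (EuclideanSpace ℝ (Fin 3)))
    (hL : ∀ x, x ∈ L ↔ ∃ m : Fin 3 → ℤ, x = ∑ i, (m i : ℝ) • B i)
    (g : EuclideanSpace ℝ (Fin 3) ≃ₗᵢ[ℝ] EuclideanSpace ℝ (Fin 3))
    (hg : g '' (L : Set (EuclideanSpace ℝ (Fin 3))) = L)
    (n : ℕ) (hn : orderOf g = n) (hfin : n ≠ 0) :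
    n = 1 ∨ n = 2 ∨ n = 3 ∨ n = 4 ∨ n = 6 := by
  have hrat : ∀ i j, B.repr (g (B j)) i ∈ Set.range (algebraMap ℚ ℝ) := by
    intro i j
    have hBj : B j ∈ L := (hL _).mpr ⟨fun i => if i = j then 1 else 0, by simp⟩
    obtain ⟨m, hm⟩ := (hL _).mp (hg.subset ⟨B j, hBj, rfl⟩)
    exact ⟨m i, by rw [hm, B.repr_sum_self]; simp⟩
  obtain ⟨M, hM⟩ :=
    Module.End.exists_matrix_orderOf_eq_of_repr_mem_range B g.toLinearEquiv.toLinearMap hrat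
  rw [g.orderOf_toLinearMap, hn] at hM
  exact hM ▸ M.orderOf_eq_one_or_two_or_three_or_four_or_six (by simp) (hM ▸ hfin)
end

section
/- Up to similarity (rotation and scaling), the only lattices L in ℝ² such that the minimal vectors K(L) generate L, the symmetry group G(L) = {g ∈ O(2) : g(L)=L} acts transitively on K(L), and G(L) acts irreducibly on ℝ², are the square lattice ℤ² and the regular triangular (hexagonal) lattice. -/
/-- The square lattice `ℤ²` in `ℝ²`. -/
noncomputable def squareLattice : AddSubgroup (EuclideanSpace ℝ (Fin 2)) :=
  AddSubgroup.closure {WithLp.toLp 2 (![1, 0] : Fin 2 → ℝ), WithLp.toLp 2 (![0, 1] : Fin 2 → ℝ)}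

/-- The regular triangular (hexagonal) lattice, generated by `(1,0)` and
`(1/2, √3/2)`. -/
noncomputable def triangularLattice : AddSubgroup (EuclideanSpace ℝ (Fin 2)) :=
  AddSubgroup.closure
    {WithLp.toLp 2 (![1, 0] : Fin 2 → ℝ),
      WithLp.toLp 2 (![1 / 2, Real.sqrt 3 / 2] : Fin 2 → ℝ)}

/-!
Let `v` be a minimal vector of `L`. Two minimal vectors `x ≠ ±y` satisfy `|⟪x, y⟫| ≤ α² / 2`,
since `x ± y ∈ L` are nonzero. In the plane, of three vectors of norm `α` two always make an
angle of at most `60°`, so this bound is attained exactly as soon as three minimal vectors are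
pairwise non-parallel. Irreducibility rules out `K(L) = {±v}` (the line `ℝ v` would be
invariant), so there is a second minimal vector `w ≠ ±v`.

If some pair of minimal vectors has inner product `α² / 2`, the minimal vectors are the six
vectors `±x, ±y, ±(x - y)`, and `L` is a scaled triangular lattice. Otherwise they are
`±v, ±w` only; every symmetry of `L` then preserves the line `ℝ (v + w)` unless `v ⊥ w`,
so irreducibility makes `L` a scaled square lattice.
-/

open RealInnerProductSpace Module

/-- `z = a x + b y` has `‖z‖² = t`, `⟪x, z⟫ = X`, `⟪y, z⟫ = Y` when `‖x‖² = ‖y‖² = t` and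
`⟪x, y⟫ = c`. -/
theorem half_le_abs_of_coords {t a b c X Y : ℝ} (ht : 0 < t) (hX : |X| ≤ t / 2) (hY : |Y| ≤ t / 2)
    (hXe : X = a * t + b * c) (hYe : Y = a * c + b * t) (hnorm : t = a * X + b * Y) :
    t / 2 ≤ |c| := by
  by_contra! hc
  have haX : a * X ≤ |a| * (t / 2) :=
    calc a * X ≤ |a| * |X| := (le_abs_self _).trans (abs_mul a X).le
      _ ≤ |a| * (t / 2) := by gcongr
  have hbY : b * Y ≤ |b| * (t / 2) :=
    calc b * Y ≤ |b| * |Y| := (le_abs_self _).trans (abs_mul b Y).le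
      _ ≤ |b| * (t / 2) := by gcongr
  have hsum : 2 ≤ |a| + |b| := by nlinarith
  have hquad : t = |a| ^ 2 * t + 2 * (a * b * c) + |b| ^ 2 * t := by
    rw [sq_abs, sq_abs]; linear_combination hnorm + a * hXe + b * hYe
  have habc : -(|a| * |b| * |c|) ≤ a * b * c := by
    rw [← abs_mul, ← abs_mul]; exact neg_abs_le _
  -- `|a|² + |b|² - |a||b| ≥ (|a| + |b|)² / 4 ≥ 1`, with slack unless `|c| = t / 2`
  nlinarith [mul_nonneg (mul_nonneg (by linarith : (0 : ℝ) ≤ |a| + |b| - 2)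
      (by positivity : (0 : ℝ) ≤ |a| + |b| + 2)) ht.le,
    mul_nonneg (by linarith : (0 : ℝ) ≤ t - 2 * |c|)
      (by nlinarith : (0 : ℝ) ≤ (|a| + |b|) ^ 2 - 4),
    mul_nonneg (by linarith [abs_nonneg c] : (0 : ℝ) ≤ 2 * t + 2 * |c|) (sq_nonneg (|a| - |b|))]

theorem closure_eq_closure_pair_of_subset {G : Type*} [AddGroup G] {s : Set G} {x y : G}
    (hx : x ∈ s) (hy : y ∈ s) (hs : s ⊆ AddSubgroup.closure {x, y}) :
    AddSubgroup.closure s = AddSubgroup.closure {x, y} :=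
  le_antisymm ((AddSubgroup.closure_le _).2 hs)
    (AddSubgroup.closure_mono (Set.insert_subset_iff.2 ⟨hx, Set.singleton_subset_iff.2 hy⟩))

section Lattice

variable {V : Type*} [NormedAddCommGroup V]

def minimalVectors (L : AddSubgroup V) (α : ℝ) : Set V := {x | x ∈ L ∧ ‖x‖ = α}

variable {L : AddSubgroup V} {α : ℝ}

theorem pos_of_isLeast_norm (hα : IsLeast {r : ℝ | ∃ x ∈ L, x ≠ 0 ∧ ‖x‖ = r} α) : 0 < α := by
  obtain ⟨v, -, hv0, rfl⟩ := hα.1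
  exact norm_pos_iff.2 hv0

theorem neg_mem_minimalVectors {x : V} (hx : x ∈ minimalVectors L α) :
    -x ∈ minimalVectors L α :=
  ⟨L.neg_mem hx.1, (norm_neg x).trans hx.2⟩

variable [InnerProductSpace ℝ V]

theorem linearIndependent_pair_of_abs_inner_lt {x y : V} (hx : x ≠ 0)
    (h : |⟪x, y⟫| < ‖x‖ * ‖y‖) : LinearIndependent ℝ ![x, y] := by
  rw [LinearIndependent.pair_iff' hx]
  rintro a rfl
  rw [real_inner_smul_right, real_inner_self_eq_norm_sq, norm_smul, Real.norm_eq_abs, abs_mul,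
    abs_of_nonneg (sq_nonneg ‖x‖)] at h
  exact h.ne (by ring)

theorem add_eq_or_eq_neg_of_inner_eq {v w p q : V} (hv : ‖v‖ = α) (hw : ‖w‖ = α)
    (hvw : ⟪v, w⟫ ≠ 0) (hvw' : |⟪v, w⟫| < α ^ 2) (hp : p ∈ ({v, -v, w, -w} : Set V))
    (hq : q ∈ ({v, -v, w, -w} : Set V)) (hpq : ⟪p, q⟫ = ⟪v, w⟫) :
    p + q = v + w ∨ p + q = -(v + w) := by
  rw [abs_lt] at hvw'
  simp only [Set.mem_insert_iff, Set.mem_singleton_iff] at hp hq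
  rcases hp with hp | hp | hp | hp <;> rcases hq with hq | hq | hq | hq <;>
    rw [hp, hq] at hpq ⊢ <;>
    simp only [inner_neg_left, inner_neg_right, neg_neg, real_inner_self_eq_norm_sq, hv, hw,
      real_inner_comm v w] at hpq <;>
    first
      | (left; abel1)
      | (right; abel1)
      | exact absurd (by linarith : ⟪v, w⟫ = 0) hvw

theorem sub_mem_minimalVectors_of_inner_eq_half_sq (hα : 0 < α) {x y : V}
    (hx : x ∈ minimalVectors L α) (hy : y ∈ minimalVectors L α) (hxy : ⟪x, y⟫ = α ^ 2 / 2) :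
    x - y ∈ minimalVectors L α :=
  ⟨L.sub_mem hx.1 hy.1, (sq_eq_sq₀ (norm_nonneg _) hα.le).1 <| by
    rw [norm_sub_sq_real, hx.2, hy.2, hxy]; ring⟩

theorem map_mem_minimalVectors {g : V ≃ₗᵢ[ℝ] V} (hg : g '' (L : Set V) = L) {x : V}
    (hx : x ∈ minimalVectors L α) : g x ∈ minimalVectors L α :=
  ⟨by rw [← SetLike.mem_coe, ← hg]; exact Set.mem_image_of_mem g hx.1, (g.norm_map x).trans hx.2⟩

theorem exists_mem_minimalVectors_ne_ne_neg
    (hline : ∀ u : V, u ≠ 0 → ∃ g : V ≃ₗᵢ[ℝ] V, g '' (L : Set V) = L ∧ g u ∉ ℝ ∙ u)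
    {v : V} (hv : v ∈ minimalVectors L α) (hv0 : v ≠ 0) :
    ∃ w ∈ minimalVectors L α, w ≠ v ∧ w ≠ -v := by
  obtain ⟨g, hg, hgv⟩ := hline v hv0
  refine ⟨g v, map_mem_minimalVectors hg hv, fun h => hgv ?_, fun h => hgv ?_⟩
  · rw [h]; exact Submodule.mem_span_singleton_self v
  · rw [h]; exact Submodule.neg_mem _ (Submodule.mem_span_singleton_self v)

theorem abs_inner_le_half_sq (hα : IsLeast {r : ℝ | ∃ x ∈ L, x ≠ 0 ∧ ‖x‖ = r} α) {x y : V}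
    (hx : x ∈ minimalVectors L α) (hy : y ∈ minimalVectors L α) (hxy : x ≠ y) (hxy' : x ≠ -y) :
    |⟪x, y⟫| ≤ α ^ 2 / 2 := by
  have hsub : α ≤ ‖x - y‖ := hα.2 ⟨x - y, L.sub_mem hx.1 hy.1, sub_ne_zero.2 hxy, rfl⟩
  have hadd : α ≤ ‖x + y‖ :=
    hα.2 ⟨x + y, L.add_mem hx.1 hy.1, fun h => hxy' (eq_neg_of_add_eq_zero_left h), rfl⟩
  have hα0 := (pos_of_isLeast_norm hα).le
  have hsub' := pow_le_pow_left₀ hα0 hsub 2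
  have hadd' := pow_le_pow_left₀ hα0 hadd 2
  rw [norm_sub_sq_real, hx.2, hy.2] at hsub'
  rw [norm_add_sq_real, hx.2, hy.2] at hadd'
  exact abs_le.2 ⟨by linarith, by linarith⟩

theorem abs_inner_lt_half_sq (hα : IsLeast {r : ℝ | ∃ x ∈ L, x ≠ 0 ∧ ‖x‖ = r} α) {x y : V}
    (hx : x ∈ minimalVectors L α) (hy : y ∈ minimalVectors L α) (hxy : x ≠ y) (hxy' : x ≠ -y)
    (hne : ∀ x ∈ minimalVectors L α, ∀ y ∈ minimalVectors L α, ⟪x, y⟫ ≠ α ^ 2 / 2) :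
    |⟪x, y⟫| < α ^ 2 / 2 := by
  refine (abs_inner_le_half_sq hα hx hy hxy hxy').lt_of_ne fun h => ?_
  rcases abs_eq (by positivity) |>.1 h with h | h
  · exact hne x hx y hy h
  · exact hne x hx (-y) (neg_mem_minimalVectors hy) (by rw [inner_neg_right, h, neg_neg])

section Plane

variable [Fact (finrank ℝ V = 2)]

theorem exists_smul_add_smul_eq {x y : V} (h : LinearIndependent ℝ ![x, y]) (z : V) :
    ∃ a b : ℝ, a • x + b • y = z := by
  have hspan := h.span_eq_top_of_card_eq_finrank
    (by rw [Fintype.card_fin, (Fact.out : finrank ℝ V = 2)])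
  rw [Matrix.range_cons_cons_empty] at hspan
  exact Submodule.mem_span_pair.1 (hspan ▸ Submodule.mem_top)

/-- Of three lines in a plane, two meet at an angle of at most `60°`. -/
theorem half_sq_le_abs_inner (hα : 0 < α) {x y z : V} (hx : ‖x‖ = α) (hy : ‖y‖ = α)
    (hz : ‖z‖ = α) (hxz : |⟪x, z⟫| ≤ α ^ 2 / 2) (hyz : |⟪y, z⟫| ≤ α ^ 2 / 2) :
    α ^ 2 / 2 ≤ |⟪x, y⟫| := by
  by_contra! hxy
  have hind : LinearIndependent ℝ ![x, y] :=
    linearIndependent_pair_of_abs_inner_lt (norm_ne_zero_iff.1 (hx ▸ hα.ne'))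
      (by rw [hx, hy]; linarith [sq_pos_of_pos hα])
  obtain ⟨a, b, rfl⟩ := exists_smul_add_smul_eq hind z
  have hxx : ⟪x, x⟫ = α ^ 2 := by rw [real_inner_self_eq_norm_sq, hx]
  have hyy : ⟪y, y⟫ = α ^ 2 := by rw [real_inner_self_eq_norm_sq, hy]
  refine hxy.not_ge (half_le_abs_of_coords (a := a) (b := b) (sq_pos_of_pos hα) hxz hyz ?_ ?_ ?_)
  · simp only [inner_add_right, real_inner_smul_right, hxx]
  · simp only [inner_add_right, real_inner_smul_right, hyy, real_inner_comm x y]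
  · rw [← hz, ← real_inner_self_eq_norm_sq]
    simp only [inner_add_left, real_inner_smul_left]

theorem exists_symmetry_not_mem_span_singleton
    (hirr : ∀ W : Submodule ℝ V,
      (∀ g : V ≃ₗᵢ[ℝ] V, g '' (L : Set V) = L → ∀ w ∈ W, g w ∈ W) → W = ⊥ ∨ W = ⊤)
    {u : V} (hu : u ≠ 0) : ∃ g : V ≃ₗᵢ[ℝ] V, g '' (L : Set V) = L ∧ g u ∉ ℝ ∙ u := by
  by_contra! hinv
  have hW (g : V ≃ₗᵢ[ℝ] V) (hg : g '' (L : Set V) = L) : ∀ w ∈ ℝ ∙ u, g w ∈ ℝ ∙ u := by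
    intro w hw
    obtain ⟨t, rfl⟩ := Submodule.mem_span_singleton.1 hw
    rw [map_smul]
    exact Submodule.smul_mem _ t (hinv g hg)
  rcases hirr (ℝ ∙ u) hW with h | h
  · exact hu (Submodule.span_singleton_eq_bot.1 h)
  · have := finrank_span_singleton (K := ℝ) hu
    rw [h, finrank_top, (Fact.out : finrank ℝ V = 2)] at this
    omega

theorem mem_hexagon_of_inner_eq_half_sq (hα : IsLeast {r : ℝ | ∃ x ∈ L, x ≠ 0 ∧ ‖x‖ = r} α)
    {x y z : V} (hx : x ∈ minimalVectors L α) (hy : y ∈ minimalVectors L α)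
    (hz : z ∈ minimalVectors L α) (hxy : ⟪x, y⟫ = α ^ 2 / 2) :
    z ∈ ({x, -x, y, -y, x - y, y - x} : Set V) := by
  have hα0 := pos_of_isLeast_norm hα
  have hd := sub_mem_minimalVectors_of_inner_eq_half_sq hα0 hx hy hxy
  by_contra hz'
  simp only [Set.mem_insert_iff, Set.mem_singleton_iff, not_or] at hz'
  obtain ⟨hzx, hzx', hzy, hzy', hzd, hzd'⟩ := hz'
  have hzx_le := abs_inner_le_half_sq hα hz hx hzx hzx'
  have hzy_le := abs_inner_le_half_sq hα hz hy hzy hzy'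
  have hzd_le := abs_inner_le_half_sq hα hz hd hzd (by rwa [neg_sub])
  have hdx : ⟪x - y, x⟫ = α ^ 2 / 2 := by
    rw [inner_sub_left, real_inner_self_eq_norm_sq, hx.2, real_inner_comm, hxy]; ring
  have hh : |α ^ 2 / 2| ≤ α ^ 2 / 2 := (abs_of_pos (by positivity)).le
  -- `⟪z, x⟫`, `⟪z, y⟫` and their difference `⟪z, x - y⟫` would all be `± α² / 2`
  have e1 := le_antisymm hzx_le (half_sq_le_abs_inner hα0 hz.2 hx.2 hy.2 hzy_le (hxy ▸ hh))
  have e2 := le_antisymm hzy_le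
    (half_sq_le_abs_inner hα0 hz.2 hy.2 hx.2 hzx_le (real_inner_comm x y ▸ hxy ▸ hh))
  have e3 := le_antisymm hzd_le (half_sq_le_abs_inner hα0 hz.2 hd.2 hx.2 hzx_le (hdx ▸ hh))
  rw [inner_sub_right] at e3
  rcases abs_cases ⟪z, x⟫ with h1 | h1 <;> rcases abs_cases ⟪z, y⟫ with h2 | h2 <;>
    rcases abs_cases (⟪z, x⟫ - ⟪z, y⟫) with h3 | h3 <;> linarith [sq_pos_of_pos hα0]

theorem mem_rhombus_of_abs_inner_lt (hα : IsLeast {r : ℝ | ∃ x ∈ L, x ≠ 0 ∧ ‖x‖ = r} α)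
    {v w z : V} (hv : v ∈ minimalVectors L α) (hw : w ∈ minimalVectors L α)
    (hz : z ∈ minimalVectors L α) (hvw : |⟪v, w⟫| < α ^ 2 / 2) :
    z ∈ ({v, -v, w, -w} : Set V) := by
  by_contra hz'
  simp only [Set.mem_insert_iff, Set.mem_singleton_iff, not_or] at hz'
  obtain ⟨hzv, hzv', hzw, hzw'⟩ := hz'
  have hvz := abs_inner_le_half_sq hα hv hz (Ne.symm hzv) fun h => hzv' (by rw [h, neg_neg])
  have hwz := abs_inner_le_half_sq hα hw hz (Ne.symm hzw) fun h => hzw' (by rw [h, neg_neg])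
  exact hvw.not_ge (half_sq_le_abs_inner (pos_of_isLeast_norm hα) hv.2 hw.2 hz.2 hvz hwz)

theorem inner_eq_zero_of_abs_inner_lt (hα : IsLeast {r : ℝ | ∃ x ∈ L, x ≠ 0 ∧ ‖x‖ = r} α)
    (hline : ∀ u : V, u ≠ 0 → ∃ g : V ≃ₗᵢ[ℝ] V, g '' (L : Set V) = L ∧ g u ∉ ℝ ∙ u)
    {v w : V} (hv : v ∈ minimalVectors L α) (hw : w ∈ minimalVectors L α) (hwv : w ≠ -v)
    (hvw : |⟪v, w⟫| < α ^ 2 / 2) : ⟪v, w⟫ = 0 := by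
  by_contra hc
  obtain ⟨g, hg, hgu⟩ := hline (v + w) fun h => hwv (eq_neg_of_add_eq_zero_right h)
  have hα2 := sq_pos_of_pos (pos_of_isLeast_norm hα)
  rw [map_add] at hgu
  rcases add_eq_or_eq_neg_of_inner_eq hv.2 hw.2 hc (by linarith)
      (mem_rhombus_of_abs_inner_lt hα hv hw (map_mem_minimalVectors hg hv) hvw)
      (mem_rhombus_of_abs_inner_lt hα hv hw (map_mem_minimalVectors hg hw) hvw)
      (g.inner_map_map v w) with h | h <;> rw [h] at hgu
  · exact hgu (Submodule.mem_span_singleton_self _)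
  · exact hgu (Submodule.neg_mem _ (Submodule.mem_span_singleton_self _))

theorem closure_minimalVectors_eq_of_inner_eq_half_sq
    (hα : IsLeast {r : ℝ | ∃ x ∈ L, x ≠ 0 ∧ ‖x‖ = r} α) {x y : V} (hx : x ∈ minimalVectors L α)
    (hy : y ∈ minimalVectors L α) (hxy : ⟪x, y⟫ = α ^ 2 / 2) :
    AddSubgroup.closure (minimalVectors L α) = AddSubgroup.closure {x, y} := by
  refine closure_eq_closure_pair_of_subset hx hy fun z hz => ?_
  have hx' : x ∈ AddSubgroup.closure {x, y} := AddSubgroup.subset_closure (by simp)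
  have hy' : y ∈ AddSubgroup.closure {x, y} := AddSubgroup.subset_closure (by simp)
  rcases mem_hexagon_of_inner_eq_half_sq hα hx hy hz hxy with rfl | rfl | rfl | rfl | rfl | rfl
  exacts [hx', neg_mem hx', hy', neg_mem hy', sub_mem hx' hy', sub_mem hy' hx']

theorem closure_minimalVectors_eq_of_abs_inner_lt
    (hα : IsLeast {r : ℝ | ∃ x ∈ L, x ≠ 0 ∧ ‖x‖ = r} α) {v w : V} (hv : v ∈ minimalVectors L α)
    (hw : w ∈ minimalVectors L α) (hvw : |⟪v, w⟫| < α ^ 2 / 2) :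
    AddSubgroup.closure (minimalVectors L α) = AddSubgroup.closure {v, w} := by
  refine closure_eq_closure_pair_of_subset hv hw fun z hz => ?_
  have hv' : v ∈ AddSubgroup.closure {v, w} := AddSubgroup.subset_closure (by simp)
  have hw' : w ∈ AddSubgroup.closure {v, w} := AddSubgroup.subset_closure (by simp)
  rcases mem_rhombus_of_abs_inner_lt hα hv hw hz hvw with rfl | rfl | rfl | rfl
  exacts [hv', neg_mem hv', hw', neg_mem hw']

end Plane

end Lattice

local notation "ℝ²" => EuclideanSpace ℝ (Fin 2)

instance : Fact (finrank ℝ ℝ² = 2) := ⟨finrank_euclideanSpace_fin⟩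

theorem exists_linearIsometryEquiv_single {p q : ℝ²} (hp : ‖p‖ = 1) (hq : ‖q‖ = 1)
    (hpq : ⟪p, q⟫ = 0) :
    ∃ g : ℝ² ≃ₗᵢ[ℝ] ℝ²,
      g (EuclideanSpace.single 0 1) = p ∧ g (EuclideanSpace.single 1 1) = q := by
  have hon : Orthonormal ℝ ![p, q] := by
    rw [orthonormal_iff_ite]
    intro i j
    fin_cases i <;> fin_cases j <;> simp [hp, hq, hpq, real_inner_comm p q]
  let b := OrthonormalBasis.mk hon
    (hon.linearIndependent.span_eq_top_of_card_eq_finrank (by simp)).ge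
  refine ⟨b.repr.symm, ?_, ?_⟩ <;> simp [b, OrthonormalBasis.repr_symm_single]

theorem image_smul_closure_pair (c : ℝ) (g : ℝ² ≃ₗᵢ[ℝ] ℝ²) (s t : ℝ²) :
    (fun z => c • g z) '' (AddSubgroup.closure {s, t} : Set ℝ²) =
      AddSubgroup.closure {c • g s, c • g t} := by
  let f : ℝ² →+ ℝ² := (c • (g : ℝ² →ₗ[ℝ] ℝ²)).toAddMonoidHom
  have := congrArg ((↑) : AddSubgroup ℝ² → Set ℝ²) (AddMonoidHom.map_closure f {s, t})
  simpa [f, Set.image_pair] using this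

theorem exists_similar_squareLattice {α : ℝ} (hα : 0 < α) {v w : ℝ²} (hv : ‖v‖ = α)
    (hw : ‖w‖ = α) (hvw : ⟪v, w⟫ = 0) :
    ∃ (c : ℝ) (g : ℝ² ≃ₗᵢ[ℝ] ℝ²), c ≠ 0 ∧
      (fun z => c • g z) '' (squareLattice : Set ℝ²) = AddSubgroup.closure {v, w} := by
  obtain ⟨g, hg0, hg1⟩ := exists_linearIsometryEquiv_single (p := α⁻¹ • v) (q := α⁻¹ • w)
    (by rw [norm_smul, hv, norm_inv, Real.norm_of_nonneg hα.le, inv_mul_cancel₀ hα.ne'])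
    (by rw [norm_smul, hw, norm_inv, Real.norm_of_nonneg hα.le, inv_mul_cancel₀ hα.ne'])
    (by rw [real_inner_smul_left, real_inner_smul_right, hvw]; ring)
  refine ⟨α, g, hα.ne', ?_⟩
  have e0 : (WithLp.toLp 2 ![1, 0] : ℝ²) = EuclideanSpace.single 0 1 := by
    ext i; fin_cases i <;> simp
  have e1 : (WithLp.toLp 2 ![0, 1] : ℝ²) = EuclideanSpace.single 1 1 := by
    ext i; fin_cases i <;> simp
  rw [squareLattice, image_smul_closure_pair, e0, e1, hg0, hg1, smul_inv_smul₀ hα.ne',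
    smul_inv_smul₀ hα.ne']

theorem exists_similar_triangularLattice {α : ℝ} (hα : 0 < α) {x y : ℝ²} (hx : ‖x‖ = α)
    (hy : ‖y‖ = α) (hxy : ⟪x, y⟫ = α ^ 2 / 2) :
    ∃ (c : ℝ) (g : ℝ² ≃ₗᵢ[ℝ] ℝ²), c ≠ 0 ∧
      (fun z => c • g z) '' (triangularLattice : Set ℝ²) = AddSubgroup.closure {x, y} := by
  have h3 : 0 < √3 := by positivity
  have hd : ‖(2 : ℝ) • y - x‖ = √3 * α := by
    refine (sq_eq_sq₀ (norm_nonneg _) (by positivity)).1 ?_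
    rw [norm_sub_sq_real, norm_smul, real_inner_smul_left, hx, hy, real_inner_comm, hxy,
      Real.norm_two, mul_pow, mul_pow, Real.sq_sqrt zero_le_three]
    ring
  obtain ⟨g, hg0, hg1⟩ := exists_linearIsometryEquiv_single (p := α⁻¹ • x)
    (q := (√3 * α)⁻¹ • ((2 : ℝ) • y - x))
    (by rw [norm_smul, hx, norm_inv, Real.norm_of_nonneg hα.le, inv_mul_cancel₀ hα.ne'])
    (by rw [norm_smul, hd, norm_inv, Real.norm_of_nonneg (by positivity),
      inv_mul_cancel₀ (by positivity)])
    (by rw [real_inner_smul_left, real_inner_smul_right, inner_sub_right, real_inner_smul_right,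
      hxy, real_inner_self_eq_norm_sq, hx]; ring)
  refine ⟨α, g, hα.ne', ?_⟩
  have e0 : (WithLp.toLp 2 ![1, 0] : ℝ²) = EuclideanSpace.single 0 1 := by
    ext i; fin_cases i <;> simp
  have e1 : (WithLp.toLp 2 ![1 / 2, √3 / 2] : ℝ²) =
      (1 / 2 : ℝ) • EuclideanSpace.single 0 1 + (√3 / 2) • EuclideanSpace.single 1 1 := by
    ext i; fin_cases i <;> simp
  have hy' : α • ((1 / 2 : ℝ) • α⁻¹ • x + (√3 / 2) • (√3 * α)⁻¹ • ((2 : ℝ) • y - x)) = y := by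
    match_scalars
    · field_simp; ring
    · field_simp
  rw [triangularLattice, image_smul_closure_pair, e0, e1, map_add, map_smul, map_smul, hg0, hg1,
    smul_inv_smul₀ hα.ne', hy']

theorem stmt_18_general (L : AddSubgroup (EuclideanSpace ℝ (Fin 2)))
    (α : ℝ) (hα : IsLeast {r : ℝ | ∃ x ∈ L, x ≠ 0 ∧ ‖x‖ = r} α)
    (K : Set (EuclideanSpace ℝ (Fin 2)))
    (hK : K = {x : EuclideanSpace ℝ (Fin 2) | x ∈ L ∧ ‖x‖ = α})
    (hgen : AddSubgroup.closure K = L)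
    (hirr : ∀ W : Submodule ℝ (EuclideanSpace ℝ (Fin 2)),
      (∀ g : EuclideanSpace ℝ (Fin 2) ≃ₗᵢ[ℝ] EuclideanSpace ℝ (Fin 2),
        g '' (L : Set (EuclideanSpace ℝ (Fin 2))) = L → ∀ w ∈ W, g w ∈ W) →
      W = ⊥ ∨ W = ⊤) :
    ∃ (c : ℝ) (g : EuclideanSpace ℝ (Fin 2) ≃ₗᵢ[ℝ] EuclideanSpace ℝ (Fin 2)),
      c ≠ 0 ∧
        ((fun x => c • g x) '' (squareLattice : Set (EuclideanSpace ℝ (Fin 2)))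
            = L ∨
          (fun x => c • g x) ''
              (triangularLattice : Set (EuclideanSpace ℝ (Fin 2))) = L) := by
  subst hK
  change AddSubgroup.closure (minimalVectors L α) = L at hgen
  have hα0 := pos_of_isLeast_norm hα
  obtain ⟨v, hvL, hv0, hvα⟩ := hα.1
  have hv : v ∈ minimalVectors L α := ⟨hvL, hvα⟩
  have hline := fun u (hu : u ≠ 0) => exists_symmetry_not_mem_span_singleton hirr hu
  obtain ⟨w, hw, hwv, hwv'⟩ := exists_mem_minimalVectors_ne_ne_neg hline hv hv0
  by_cases hex : ∃ x ∈ minimalVectors L α, ∃ y ∈ minimalVectors L α, ⟪x, y⟫ = α ^ 2 / 2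
  · obtain ⟨x, hx, y, hy, hxy⟩ := hex
    obtain ⟨c, g, hc, hsim⟩ := exists_similar_triangularLattice hα0 hx.2 hy.2 hxy
    rw [← hgen, closure_minimalVectors_eq_of_inner_eq_half_sq hα hx hy hxy]
    exact ⟨c, g, hc, Or.inr hsim⟩
  · push Not at hex
    have hvw := abs_inner_lt_half_sq hα hv hw hwv.symm (fun h => hwv' (by rw [h, neg_neg])) hex
    obtain ⟨c, g, hc, hsim⟩ := exists_similar_squareLattice hα0 hv.2 hw.2
      (inner_eq_zero_of_abs_inner_lt hα hline hv hw hwv' hvw)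
    rw [← hgen, closure_minimalVectors_eq_of_abs_inner_lt hα hv hw hvw]
    exact ⟨c, g, hc, Or.inl hsim⟩

/-- Up to similarity, the square lattice and the regular triangular lattice
are the only orthogonally symmetric lattices in `ℝ²`: lattices whose minimal
vectors generate them, on whose minimal vectors `G(L)` acts transitively, and
for which the action of `G(L)` on `ℝ²` is irreducible. -/
theorem stmt_18 (L : AddSubgroup (EuclideanSpace ℝ (Fin 2)))
    (B : Module.Basis (Fin 2) ℝ (EuclideanSpace ℝ (Fin 2)))
    (hL : ∀ x, x ∈ L ↔ ∃ m : Fin 2 → ℤ, x = ∑ i, (m i : ℝ) • B i)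
    (α : ℝ) (hα : IsLeast {r : ℝ | ∃ x ∈ L, x ≠ 0 ∧ ‖x‖ = r} α)
    (K : Set (EuclideanSpace ℝ (Fin 2)))
    (hK : K = {x : EuclideanSpace ℝ (Fin 2) | x ∈ L ∧ ‖x‖ = α})
    (hgen : AddSubgroup.closure K = L)
    (htrans : ∀ a ∈ K, ∀ b ∈ K,
      ∃ g : EuclideanSpace ℝ (Fin 2) ≃ₗᵢ[ℝ] EuclideanSpace ℝ (Fin 2),
        g '' (L : Set (EuclideanSpace ℝ (Fin 2))) = L ∧ g a = b)
    (hirr : ∀ W : Submodule ℝ (EuclideanSpace ℝ (Fin 2)),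
      (∀ g : EuclideanSpace ℝ (Fin 2) ≃ₗᵢ[ℝ] EuclideanSpace ℝ (Fin 2),
        g '' (L : Set (EuclideanSpace ℝ (Fin 2))) = L → ∀ w ∈ W, g w ∈ W) →
      W = ⊥ ∨ W = ⊤) :
    ∃ (c : ℝ) (g : EuclideanSpace ℝ (Fin 2) ≃ₗᵢ[ℝ] EuclideanSpace ℝ (Fin 2)),
      c ≠ 0 ∧
        ((fun x => c • g x) '' (squareLattice : Set (EuclideanSpace ℝ (Fin 2)))
            = L ∨
          (fun x => c • g x) ''
              (triangularLattice : Set (EuclideanSpace ℝ (Fin 2))) = L) :=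
  stmt_18_general L α hα K hK hgen hirr
end
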